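/- Let G be a maximal stabilizer group on N qubits with stabilizer state |ψ_G⟩, and let Ĥ = Σ_P h(P)·P be a traceless operator expanded in nonidentity prefactor-1 Pauli strings. If Ĥ|ψ_G⟩ = 0, then for every prefactor-1 Pauli string P, Σ_{Q : a_{P,Q}PQ ∈ G} h(Q)·a_{P,Q}^{−1} = 0, where the sum is over nonidentity prefactor-1 Pauli strings Q equivalent to P. -/

import Mathlib

open Matrix Complex BigOperators
open scoped Classical

noncomputable section

/-- Single-qubit Pauli matrices: I, X, Y, Z. -/
def pauli1 : Fin 4 → Matrix (Fin 2) (Fin 2) ℂ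
  | 0 => 1
  | 1 => !![0, 1; 1, 0]
  | 2 => !![0, -Complex.I; Complex.I, 0]
  | 3 => !![1, 0; 0, -1]

/-- Operators on an N-qubit system with sites indexed by `V`. -/
abbrev QOp (V : Type*) := Matrix (V → Fin 2) (V → Fin 2) ℂ

/-- The prefactor-1 Pauli string with single-site labels `p`. -/
def pauliOp {V : Type*} [Fintype V] (p : V → Fin 4) : QOp V :=
  Matrix.of fun x y => ∏ i, pauli1 (p i) (x i) (y i)

/-- Support of a Pauli string: sites where the tensor factor is not the identity. -/
def psupp {V : Type*} [Fintype V] (p : V → Fin 4) : Finset V :=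
  Finset.univ.filter fun i => p i ≠ 0

/-- Allowed phases of Pauli group elements. -/
def isPhase (a : ℂ) : Prop := a = 1 ∨ a = -1 ∨ a = Complex.I ∨ a = -Complex.I

/-- A maximal stabilizer group on qubits indexed by `V`: an abelian set of
prefactor-`±1` Pauli strings, closed under multiplication, containing `I`,
not containing `-I`, of cardinality `2 ^ |V|`. -/
structure MaxStabilizer (V : Type*) [Fintype V] [DecidableEq V] where
  carrier : Finset (QOp V)
  mem_pauli : ∀ g ∈ carrier, ∃ (c : ℂ) (p : V → Fin 4), (c = 1 ∨ c = -1) ∧ g = c • pauliOp p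
  one_mem : (1 : QOp V) ∈ carrier
  mul_mem : ∀ g ∈ carrier, ∀ h ∈ carrier, g * h ∈ carrier
  mul_comm' : ∀ g ∈ carrier, ∀ h ∈ carrier, g * h = h * g
  neg_one_not_mem : (-1 : QOp V) ∉ carrier
  card_eq : carrier.card = 2 ^ Fintype.card V

/-- `ψ` is the stabilizer state of `G`: a normalized common `+1`-eigenvector of all
elements of `G`. -/
def IsStabState {V : Type*} [Fintype V] [DecidableEq V] (G : MaxStabilizer V)
    (ψ : (V → Fin 2) → ℂ) : Prop :=
  (∀ g ∈ G.carrier, Matrix.mulVec g ψ = ψ) ∧ ∑ x, starRingEnd ℂ (ψ x) * ψ x = 1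

/-- The projector `|ψ⟩⟨ψ|` onto a state `ψ`. -/
def projOf {V : Type*} (ψ : (V → Fin 2) → ℂ) : QOp V :=
  Matrix.vecMulVec ψ fun x => starRingEnd ℂ (ψ x)

/-- Reduced density matrix (partial trace over the complement of `A`). -/
def reduced {V : Type*} [Fintype V] [DecidableEq V] (ρ : QOp V) (A : Finset V) :
    Matrix ({i // i ∈ A} → Fin 2) ({i // i ∈ A} → Fin 2) ℂ :=
  Matrix.of fun a b => ∑ c : {i // i ∉ A} → Fin 2,
    ρ (fun i => if h : i ∈ A then a ⟨i, h⟩ else c ⟨i, h⟩)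
      (fun i => if h : i ∈ A then b ⟨i, h⟩ else c ⟨i, h⟩)

/-- `δ(G)`: minimum support size over nonidentity elements of `G`. -/
def sdelta {V : Type*} [Fintype V] [DecidableEq V] (G : MaxStabilizer V) : ℕ :=
  sInf {k | ∃ (c : ℂ) (p : V → Fin 4), (c = 1 ∨ c = -1) ∧ c • pauliOp p ∈ G.carrier ∧
    c • pauliOp p ≠ 1 ∧ (psupp p).card = k}

/-- The relation `P ∼ Q` iff `a·P·Q ∈ G` for some phase `a ∈ {±1, ±i}`. -/
def PRel {V : Type*} [Fintype V] [DecidableEq V] (G : MaxStabilizer V)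
    (P Q : V → Fin 4) : Prop :=
  ∃ a : ℂ, isPhase a ∧ a • (pauliOp P * pauliOp Q) ∈ G.carrier


/-!
Averaging the `2 ^ N` elements of `G` gives a self-adjoint idempotent of trace one fixing `ψ`,
so it is the projector `|ψ⟩⟨ψ|`. Hence `⟨ψ|R|ψ⟩ = 2 ^ (-N) ∑_{g ∈ G} tr (R g)`, which for
`R = P Q` vanishes unless `a P Q ∈ G` for some phase `a`, and then equals `a⁻¹`. Expanding
`⟨ψ|P Ĥ|ψ⟩ = 0` over the Pauli strings `Q` gives the claim.
-/

def pauli1Mul : Fin 4 → Fin 4 → Fin 4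
  | 0, b => b
  | 1, 0 => 1 | 1, 1 => 0 | 1, 2 => 3 | 1, 3 => 2
  | 2, 0 => 2 | 2, 1 => 3 | 2, 2 => 0 | 2, 3 => 1
  | 3, 0 => 3 | 3, 1 => 2 | 3, 2 => 1 | 3, 3 => 0

def pauli1Phase : Fin 4 → Fin 4 → ℂ
  | 0, _ => 1
  | 1, 0 => 1 | 1, 1 => 1 | 1, 2 => Complex.I | 1, 3 => -Complex.I
  | 2, 0 => 1 | 2, 1 => -Complex.I | 2, 2 => 1 | 2, 3 => Complex.I
  | 3, 0 => 1 | 3, 1 => Complex.I | 3, 2 => -Complex.I | 3, 3 => 1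

lemma pauli1_mul (a b : Fin 4) :
    pauli1 a * pauli1 b = pauli1Phase a b • pauli1 (pauli1Mul a b) := by
  fin_cases a <;> fin_cases b <;>
    · ext i j
      fin_cases i <;> fin_cases j <;>
        simp [pauli1, pauli1Mul, pauli1Phase, Matrix.mul_apply, Fin.sum_univ_two,
          Matrix.one_apply]

lemma pauli1Mul_eq_zero_iff (a b : Fin 4) : pauli1Mul a b = 0 ↔ a = b := by
  fin_cases a <;> fin_cases b <;> decide

lemma pauli1Mul_self (a : Fin 4) : pauli1Mul a a = 0 :=
  (pauli1Mul_eq_zero_iff a a).2 rfl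

lemma pauli1Phase_self (a : Fin 4) : pauli1Phase a a = 1 := by
  fin_cases a <;> rfl

lemma pauli1Phase_pow_four (a b : Fin 4) : pauli1Phase a b ^ 4 = 1 := by
  fin_cases a <;> fin_cases b <;> norm_num [pauli1Phase, Complex.I_pow_four]

lemma conjTranspose_pauli1 (a : Fin 4) : (pauli1 a)ᴴ = pauli1 a := by
  fin_cases a <;> ext i j <;> fin_cases i <;> fin_cases j <;> simp [pauli1]

lemma trace_pauli1 (a : Fin 4) : (pauli1 a).trace = if a = 0 then 2 else 0 := by
  fin_cases a <;> norm_num [pauli1, Matrix.trace, Fin.sum_univ_two]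

lemma isPhase_iff_pow_four_eq_one (a : ℂ) : isPhase a ↔ a ^ 4 = 1 := by
  constructor
  · rintro (rfl | rfl | rfl | rfl) <;> norm_num [Complex.I_pow_four]
  · intro h
    have : (a - 1) * (a + 1) * (a - Complex.I) * (a + Complex.I) = 0 := by
      linear_combination h - (a ^ 2 - 1) * Complex.I_sq
    simp only [mul_eq_zero, sub_eq_zero, add_eq_zero_iff_eq_neg] at this
    unfold isPhase
    tauto

lemma isPhase.ne_zero {a : ℂ} (ha : isPhase a) : a ≠ 0 := by
  rintro rfl
  simp [isPhase_iff_pow_four_eq_one] at ha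

section PauliString

variable {V : Type*} [Fintype V]

lemma pauliOp_zero : pauliOp (0 : V → Fin 4) = 1 := by
  ext x y
  simp [pauliOp, pauli1, Matrix.one_apply, Finset.prod_boole, funext_iff]

lemma conjTranspose_pauliOp (p : V → Fin 4) : (pauliOp p)ᴴ = pauliOp p := by
  ext x y
  simp only [Matrix.conjTranspose_apply, pauliOp, Matrix.of_apply, star_prod]
  exact Finset.prod_congr rfl fun i _ => congrFun₂ (conjTranspose_pauli1 (p i)) (x i) (y i)

lemma isPhase_prod_pauli1Phase (p q : V → Fin 4) : isPhase (∏ i, pauli1Phase (p i) (q i)) := by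
  rw [isPhase_iff_pow_four_eq_one, ← Finset.prod_pow]
  exact Finset.prod_eq_one fun i _ => pauli1Phase_pow_four _ _

-- Under the ambient `open scoped Classical`, omitting this instance would make the `Fintype`
-- instance of `V → Fin 2`, hence matrix multiplication, differ from the one `MaxStabilizer` uses.
variable [DecidableEq V]

lemma pauliOp_mul (p q : V → Fin 4) :
    pauliOp p * pauliOp q
      = (∏ i, pauli1Phase (p i) (q i)) • pauliOp (fun i => pauli1Mul (p i) (q i)) := by
  ext x y
  have hsite (i : V) : ∑ t, pauli1 (p i) (x i) t * pauli1 (q i) t (y i)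
      = pauli1Phase (p i) (q i) * pauli1 (pauli1Mul (p i) (q i)) (x i) (y i) := by
    simpa [Matrix.mul_apply] using congrFun₂ (pauli1_mul (p i) (q i)) (x i) (y i)
  simp only [Matrix.mul_apply, pauliOp, Matrix.of_apply, Matrix.smul_apply, smul_eq_mul,
    ← Finset.prod_mul_distrib, ← hsite, Finset.prod_univ_sum, Fintype.piFinset_univ]

lemma pauliOp_mul_self (p : V → Fin 4) : pauliOp p * pauliOp p = 1 := by
  rw [pauliOp_mul]
  simp only [pauli1Phase_self, Finset.prod_const_one, one_smul, pauli1Mul_self]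
  exact pauliOp_zero

lemma trace_pauliOp (p : V → Fin 4) :
    (pauliOp p).trace = if p = 0 then 2 ^ Fintype.card V else 0 := by
  have : (pauliOp p).trace = ∏ i, (pauli1 (p i)).trace := by
    simp only [Matrix.trace, Matrix.diag, pauliOp, Matrix.of_apply, Finset.prod_univ_sum,
      Fintype.piFinset_univ]
  rw [this]
  simp only [trace_pauli1, Finset.prod_ite_zero, Finset.prod_const, Finset.card_univ,
    Finset.mem_univ, true_implies, funext_iff, Pi.zero_apply]

lemma trace_pauliOp_mul_pauliOp (p q : V → Fin 4) :
    (pauliOp p * pauliOp q).trace = if p = q then 2 ^ Fintype.card V else 0 := by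
  rw [pauliOp_mul, Matrix.trace_smul, trace_pauliOp, smul_eq_mul]
  have hzero : (fun i => pauli1Mul (p i) (q i)) = 0 ↔ p = q := by
    simp only [funext_iff, Pi.zero_apply, pauli1Mul_eq_zero_iff]
  by_cases hpq : p = q
  · rw [if_pos (hzero.2 hpq), if_pos hpq, hpq]
    simp [pauli1Phase_self]
  · simp [hzero, hpq]

end PauliString

theorem Matrix.IsStarProjection.eq_of_mul_eq_of_trace_eq {n R : Type*} [Fintype n]
    [CommRing R] [PartialOrder R] [StarRing R] [StarOrderedRing R]
    [NoZeroDivisors R] {p q : Matrix n n R} (hp : IsStarProjection p)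
    (hq : IsStarProjection q) (hqp : q * p = p) (htr : q.trace = p.trace) : p = q := by
  have hd := hp.sub_of_mul_eq_right hq hqp
  have : ((q - p)ᴴ * (q - p)).trace = 0 := by
    rw [← Matrix.star_eq_conjTranspose, hd.isSelfAdjoint.star_eq, hd.isIdempotentElem.eq,
      Matrix.trace_sub, htr, sub_self]
  exact (sub_eq_zero.mp (Matrix.trace_conjTranspose_mul_self_eq_zero_iff.mp this)).symm

lemma projOf_eq {V : Type*} (ψ : (V → Fin 2) → ℂ) : projOf ψ = Matrix.vecMulVec ψ (star ψ) :=
  rfl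

section Projector

variable {V : Type*} [Fintype V] [DecidableEq V]

lemma isStarProjection_projOf {ψ : (V → Fin 2) → ℂ} (hψ : star ψ ⬝ᵥ ψ = 1) :
    IsStarProjection (projOf ψ) where
  isIdempotentElem := by
    rw [IsIdempotentElem, projOf_eq, Matrix.vecMulVec_mul_vecMulVec, hψ, one_smul]
  isSelfAdjoint := by
    rw [IsSelfAdjoint, Matrix.star_eq_conjTranspose, projOf_eq, Matrix.conjTranspose_vecMulVec,
      star_star]

lemma trace_projOf (ψ : (V → Fin 2) → ℂ) : (projOf ψ).trace = star ψ ⬝ᵥ ψ := by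
  rw [projOf_eq, Matrix.trace_vecMulVec, dotProduct_comm]

lemma mul_projOf_eq_projOf {A : QOp V} {ψ : (V → Fin 2) → ℂ} (h : A *ᵥ ψ = ψ) :
    A * projOf ψ = projOf ψ := by
  rw [projOf_eq, Matrix.mul_vecMulVec, h]

lemma dotProduct_mulVec_eq_trace_mul_projOf (R : QOp V) (ψ : (V → Fin 2) → ℂ) :
    star ψ ⬝ᵥ R *ᵥ ψ = (R * projOf ψ).trace := by
  rw [projOf_eq, Matrix.mul_vecMulVec, Matrix.trace_vecMulVec, dotProduct_comm]

end Projector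

namespace MaxStabilizer

variable {V : Type*} [Fintype V] [DecidableEq V] (G : MaxStabilizer V)

lemma isSelfAdjoint_of_mem {g : QOp V} (hg : g ∈ G.carrier) : IsSelfAdjoint g := by
  obtain ⟨c, p, hc, rfl⟩ := G.mem_pauli g hg
  rw [IsSelfAdjoint, Matrix.star_eq_conjTranspose, Matrix.conjTranspose_smul,
    conjTranspose_pauliOp]
  rcases hc with rfl | rfl <;> simp

lemma mul_self_of_mem {g : QOp V} (hg : g ∈ G.carrier) : g * g = 1 := by
  obtain ⟨c, p, hc, rfl⟩ := G.mem_pauli g hg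
  rw [Matrix.smul_mul, Matrix.mul_smul, smul_smul, pauliOp_mul_self]
  rcases hc with rfl | rfl <;> simp

lemma mul_sum_carrier {g : QOp V} (hg : g ∈ G.carrier) :
    g * ∑ k ∈ G.carrier, k = ∑ k ∈ G.carrier, k := by
  have hinv (k : QOp V) : g * (g * k) = k := by rw [← mul_assoc, G.mul_self_of_mem hg, one_mul]
  rw [Finset.mul_sum]
  exact Finset.sum_nbij' (g * ·) (g * ·) (fun k hk => G.mul_mem g hg k hk)
    (fun k hk => G.mul_mem g hg k hk) (fun k _ => hinv k) (fun k _ => hinv k) fun _ _ => rfl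

lemma trace_eq_zero_of_mem {g : QOp V} (hg : g ∈ G.carrier) (hg1 : g ≠ 1) : g.trace = 0 := by
  obtain ⟨c, p, hc, rfl⟩ := G.mem_pauli g hg
  rw [Matrix.trace_smul, trace_pauliOp, smul_eq_mul]
  split_ifs with hp
  · subst hp
    rw [pauliOp_zero] at hg hg1
    rcases hc with rfl | rfl
    · exact absurd (one_smul ℂ _) hg1
    · exact absurd (by simpa using hg) G.neg_one_not_mem
  · rw [mul_zero]

lemma trace_sum_carrier : (∑ g ∈ G.carrier, g).trace = 2 ^ Fintype.card V := by
  rw [Matrix.trace_sum, Finset.sum_eq_single_of_mem 1 G.one_mem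
    fun g hg hg1 => G.trace_eq_zero_of_mem hg hg1, Matrix.trace_one]
  simp

def projector : QOp V := ((2 : ℂ) ^ Fintype.card V)⁻¹ • ∑ g ∈ G.carrier, g

lemma isStarProjection_projector : IsStarProjection G.projector where
  isIdempotentElem := by
    rw [IsIdempotentElem, projector, Matrix.smul_mul, Matrix.mul_smul, Finset.sum_mul,
      Finset.sum_congr rfl fun g hg => G.mul_sum_carrier hg, Finset.sum_const, G.card_eq,
      smul_smul, ← Nat.cast_smul_eq_nsmul ℂ, smul_smul]
    push_cast
    field_simp
  isSelfAdjoint := by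
    rw [projector, IsSelfAdjoint, star_smul, star_sum, star_inv₀, star_pow, star_ofNat,
      Finset.sum_congr rfl fun g hg => (G.isSelfAdjoint_of_mem hg).star_eq]

lemma trace_projector : G.projector.trace = 1 := by
  rw [projector, Matrix.trace_smul, G.trace_sum_carrier, smul_eq_mul,
    inv_mul_cancel₀ (pow_ne_zero _ two_ne_zero)]

lemma projector_mulVec {ψ : (V → Fin 2) → ℂ} (hψ : ∀ g ∈ G.carrier, g *ᵥ ψ = ψ) :
    G.projector *ᵥ ψ = ψ := by
  rw [projector, Matrix.smul_mulVec, Matrix.sum_mulVec, Finset.sum_congr rfl hψ,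
    Finset.sum_const, G.card_eq, ← Nat.cast_smul_eq_nsmul ℂ, smul_smul]
  push_cast
  rw [inv_mul_cancel₀ (pow_ne_zero _ two_ne_zero), one_smul]

end MaxStabilizer

variable {V : Type*} [Fintype V] [DecidableEq V] {G : MaxStabilizer V} {ψ : (V → Fin 2) → ℂ}

lemma IsStabState.star_dotProduct_self (hψ : IsStabState G ψ) : star ψ ⬝ᵥ ψ = 1 := by
  simpa [dotProduct] using hψ.2

open scoped ComplexOrder in
theorem IsStabState.projOf_eq_projector (hψ : IsStabState G ψ) : projOf ψ = G.projector :=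
  (isStarProjection_projOf hψ.star_dotProduct_self).eq_of_mul_eq_of_trace_eq
    G.isStarProjection_projector (mul_projOf_eq_projOf (G.projector_mulVec hψ.1))
    (by rw [G.trace_projector, trace_projOf, hψ.star_dotProduct_self])

lemma MaxStabilizer.trace_pauliOp_mul_mul_eq_zero {P Q : V → Fin 4} (hPQ : ¬ PRel G P Q)
    {g : QOp V} (hg : g ∈ G.carrier) : (pauliOp P * pauliOp Q * g).trace = 0 := by
  obtain ⟨d, q, hd, rfl⟩ := G.mem_pauli g hg
  set ω := ∏ i, pauli1Phase (P i) (Q i)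
  have hω : isPhase ω := isPhase_prod_pauli1Phase P Q
  rw [pauliOp_mul, Matrix.smul_mul, Matrix.mul_smul, Matrix.trace_smul, Matrix.trace_smul,
    trace_pauliOp_mul_pauliOp, if_neg, smul_zero, smul_zero]
  rintro rfl
  refine hPQ ⟨d * ω⁻¹, ?_, ?_⟩
  · rw [isPhase_iff_pow_four_eq_one] at hω ⊢
    rcases hd with rfl | rfl <;> norm_num [neg_pow, inv_pow, hω]
  · rwa [pauliOp_mul, smul_smul, mul_assoc, inv_mul_cancel₀ hω.ne_zero, mul_one]

namespace IsStabState

lemma dotProduct_mulVec_of_mem (hψ : IsStabState G ψ) {g : QOp V} (hg : g ∈ G.carrier) :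
    star ψ ⬝ᵥ g *ᵥ ψ = 1 := by
  rw [hψ.1 g hg, hψ.star_dotProduct_self]

lemma dotProduct_mulVec_eq_inv (hψ : IsStabState G ψ) {R : QOp V} {a : ℂ}
    (ha : a • R ∈ G.carrier) : star ψ ⬝ᵥ R *ᵥ ψ = a⁻¹ := by
  have h := hψ.dotProduct_mulVec_of_mem ha
  rw [Matrix.smul_mulVec, dotProduct_smul, smul_eq_mul] at h
  exact eq_inv_of_mul_eq_one_right h

lemma dotProduct_pauliOp_mul_mulVec_eq_zero (hψ : IsStabState G ψ) {P Q : V → Fin 4}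
    (hPQ : ¬ PRel G P Q) : star ψ ⬝ᵥ (pauliOp P * pauliOp Q) *ᵥ ψ = 0 := by
  rw [dotProduct_mulVec_eq_trace_mul_projOf, hψ.projOf_eq_projector, MaxStabilizer.projector,
    Matrix.mul_smul, Matrix.trace_smul, Finset.mul_sum, Matrix.trace_sum,
    Finset.sum_eq_zero fun g hg => G.trace_pauliOp_mul_mul_eq_zero hPQ hg, smul_zero]

end IsStabState

/-- if the traceless `Ĥ = Σ_P h(P)·P` annihilates the stabilizer state,
then for every prefactor-1 Pauli string `P`,
`Σ_{Q : a_{P,Q}PQ ∈ G} h(Q)·a_{P,Q}⁻¹ = 0`, the sum over nonidentity `Q ∼ P`. -/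
theorem stmt18 (N : ℕ) (G : MaxStabilizer (Fin N)) (ψ : (Fin N → Fin 2) → ℂ)
    (hψ : IsStabState G ψ) (h : (Fin N → Fin 4) → ℂ)
    (htr : h (fun _ => 0) = 0)
    (hann : (∑ P : Fin N → Fin 4, h P • pauliOp P).mulVec ψ = 0)
    (P : Fin N → Fin 4) (a : (Fin N → Fin 4) → ℂ)
    (ha : ∀ Q, PRel G P Q → isPhase (a Q) ∧ a Q • (pauliOp P * pauliOp Q) ∈ G.carrier) :
    ∑ Q ∈ Finset.univ.filter (fun Q : Fin N → Fin 4 =>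
      Q ≠ (fun _ => 0) ∧ PRel G P Q), h Q * (a Q)⁻¹ = 0 := by
  have hexpect : ∑ Q, h Q * (star ψ ⬝ᵥ (pauliOp P * pauliOp Q) *ᵥ ψ) = 0 := by
    calc _ = star ψ ⬝ᵥ (pauliOp P * ∑ Q, h Q • pauliOp Q) *ᵥ ψ := by
          simp only [Finset.mul_sum, Matrix.mul_smul, Matrix.sum_mulVec, Matrix.smul_mulVec,
            dotProduct_sum, dotProduct_smul, smul_eq_mul]
      _ = 0 := by rw [← Matrix.mulVec_mulVec, hann, Matrix.mulVec_zero, dotProduct_zero]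
  rw [← hexpect, Finset.sum_filter]
  refine Finset.sum_congr rfl fun Q _ => ?_
  split_ifs with hQ
  · rw [hψ.dotProduct_mulVec_eq_inv (ha Q hQ.2).2]
  · rcases not_and_or.mp hQ with hQ0 | hPQ
    · rw [not_not.mp hQ0, htr, zero_mul]
    · rw [hψ.dotProduct_pauliOp_mul_mulVec_eq_zero hPQ, mul_zero]
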